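/- arXiv:2305.17399 — 2 statements merged into one kernel-verified Lean document; each statement's English description precedes it below -/
import Mathlib

section
/- Let G be a multiplicative Lie algebra, and define M_0(G) = G, M_{n+1}(G) = (G⋆M_n(G))[G,M_n(G)], and Z_0(G) = {1}, Z_{n+1}(G) the preimage in G of Z(G/Z_n(G)), where Z(H) denotes LZ(H) ∩ Z(H) (Lie center intersect group center). Then M_n(G) = {1} for some n if and only if Z_n(G) = G for some n; more precisely, the lower central series terminates at {1} at step n if and only if the upper central series terminates at G at step n. -/
/-!
Since `x ⋆ y` and `⁅x, y⁆` are only inverted when `x` and `y` are swapped, and each `𝒵ₘ(G)` is a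
normal subgroup, the two series are adjoint: `Mₖ₊₁(G) ⊆ 𝒵ₘ(G)` iff `Mₖ(G) ⊆ 𝒵ₘ₊₁(G)`.
Iterating, `Mₖ(G) ⊆ 𝒵ₘ(G)` iff `Mₖ₊ₘ(G) = 1`, and `k = 0` is the claim.
-/

/-- A multiplicative Lie algebra (Ellis): a group `G` with a second binary
operation `⋆` satisfying the five identities. `ˣy` denotes `x*y*x⁻¹`. -/
class MulLie (G : Type*) [Group G] where
  star : G → G → G
  star_self : ∀ x : G, star x x = 1
  star_mul_right : ∀ x y z : G, star x (y * z) = star x y * (y * star x z * y⁻¹)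
  star_mul_left : ∀ x y z : G, star (x * y) z = (x * star y z * x⁻¹) * star x z
  jacobi : ∀ x y z : G,
    star (star x y) (y * z * y⁻¹) * star (star y z) (z * x * z⁻¹) *
      star (star z x) (x * y * x⁻¹) = 1
  conj_star : ∀ x y z : G, z * star x y * z⁻¹ = star (z * x * z⁻¹) (z * y * z⁻¹)

open MulLie
open scoped commutatorElement

/-- The lower central series of a multiplicative Lie algebra:
`M₀(G) = G`, `M_{n+1}(G) = (G ⋆ Mₙ(G))[G, Mₙ(G)]`. -/
def Mser (G : Type*) [Group G] [MulLie G] : ℕ → Subgroup G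
  | 0 => ⊤
  | n + 1 => Subgroup.closure
      {z : G | ∃ g m : G, m ∈ Mser G n ∧ (z = star g m ∨ z = ⁅g, m⁆)}

/-- The upper central series: `𝒵₀(G) = {1}`, and `𝒵_{n+1}(G)` is the preimage of
`𝒵(G/𝒵ₙ(G)) = LZ(G/𝒵ₙ(G)) ∩ Z(G/𝒵ₙ(G))`, i.e. the set of `x` such that for
every `y`, both `x ⋆ y` and `[x, y]` lie in `𝒵ₙ(G)`. -/
def Zser (G : Type*) [Group G] [MulLie G] : ℕ → Set G
  | 0 => {1}
  | n + 1 => {x : G | ∀ y : G, star x y ∈ Zser G n ∧ ⁅x, y⁆ ∈ Zser G n}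

namespace MulLie

variable {G : Type*} [Group G] [MulLie G]

@[simp]
theorem star_one_left (y : G) : star (1 : G) y = 1 := by
  simpa using star_mul_left (1 : G) 1 y

theorem star_inv (x y : G) : (star x y)⁻¹ = star y x := by
  have h := star_self (x * y)
  rw [star_mul_left, star_mul_right, star_mul_right, star_self, star_self] at h
  simpa [mul_assoc, mul_eq_one_iff_eq_inv, conj_eq_one_iff] using h

theorem star_inv_left (x y : G) : star x⁻¹ y = x⁻¹ * star y x * x := by
  have h := star_mul_left x⁻¹ x y
  rw [inv_mul_cancel, star_one_left, inv_inv] at h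
  rw [eq_inv_of_mul_eq_one_right h.symm, ← star_inv x y]
  group

/-- The preimage in `G` of `𝒵(G/N) = LZ(G/N) ∩ Z(G/N)`. -/
def centerModulo (N : Subgroup G) [hN : N.Normal] : Subgroup G where
  carrier := {x | ∀ y, star x y ∈ N ∧ ⁅x, y⁆ ∈ N}
  one_mem' y := by simp [N.one_mem]
  mul_mem' {x x'} hx hx' y := by
    rw [star_mul_left, commutatorElement_mul_left_eq_conj_mul]
    exact ⟨N.mul_mem (hN.conj_mem _ (hx' y).1 x) (hx y).1,
      N.mul_mem (hN.conj_mem _ (hx' y).2 x) (hx y).2⟩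
  inv_mem' {x} hx y := by
    rw [star_inv_left, commutatorElement_inv_left, ← star_inv,
      ← commutatorElement_inv]
    exact ⟨hN.conj_mem' _ (N.inv_mem (hx y).1) x, hN.conj_mem' _ (N.inv_mem (hx y).2) x⟩

theorem mem_centerModulo {N : Subgroup G} [N.Normal] {x : G} :
    x ∈ centerModulo N ↔ ∀ y, star x y ∈ N ∧ ⁅x, y⁆ ∈ N :=
  Iff.rfl

instance (N : Subgroup G) [hN : N.Normal] : (centerModulo N).Normal where
  conj_mem x hx g y := by
    obtain ⟨y, rfl⟩ : ∃ y', y = g * y' * g⁻¹ := ⟨g⁻¹ * y * g, by group⟩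
    rw [← conj_star, ← conjugate_commutatorElement]
    exact ⟨hN.conj_mem _ (hx y).1 g, hN.conj_mem _ (hx y).2 g⟩

theorem exists_normal_coe_eq_Zser (n : ℕ) :
    ∃ N : Subgroup G, N.Normal ∧ (N : Set G) = Zser G n := by
  induction n with
  | zero => exact ⟨⊥, inferInstance, Subgroup.coe_bot⟩
  | succ n ih =>
    obtain ⟨N, hN, hNZ⟩ := ih
    refine ⟨centerModulo N, inferInstance, ?_⟩
    ext x
    simp only [Zser, ← hNZ, SetLike.mem_coe, mem_centerModulo, Set.mem_ofPred_eq]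

theorem Mser_succ_subset_iff (k m : ℕ) :
    (Mser G (k + 1) : Set G) ⊆ Zser G m ↔ (Mser G k : Set G) ⊆ Zser G (m + 1) := by
  obtain ⟨N, -, hN⟩ := exists_normal_coe_eq_Zser (G := G) m
  rw [Zser, ← hN, SetLike.coe_subset_coe, Mser, Subgroup.closure_le]
  constructor
  · intro h x hx y
    rw [← star_inv, ← commutatorElement_inv]
    exact ⟨inv_mem (h ⟨y, x, hx, .inl rfl⟩), inv_mem (h ⟨y, x, hx, .inr rfl⟩)⟩
  · rintro h z ⟨g, x, hx, rfl | rfl⟩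
    · rw [← star_inv]
      exact inv_mem (h hx g).1
    · rw [← commutatorElement_inv]
      exact inv_mem (h hx g).2

theorem Mser_subset_Zser_iff (k m : ℕ) :
    (Mser G k : Set G) ⊆ Zser G m ↔ Mser G (k + m) = ⊥ := by
  induction m generalizing k with
  | zero =>
    rw [Zser, ← Subgroup.coe_bot, SetLike.coe_subset_coe, le_bot_iff]
    rfl
  | succ m ih => rw [← Mser_succ_subset_iff, ih, Nat.add_right_comm, Nat.add_assoc]

end MulLie

/-- The lower central series of `G` terminates at `{1}` at the `n`-th step
if and only if the upper central series terminates at `G` at the `n`-th step. -/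
theorem lower_central_bot_iff_upper_central_top
    (G : Type*) [Group G] [MulLie G] (n : ℕ) :
    Mser G n = ⊥ ↔ Zser G n = Set.univ := by
  simpa [Mser, Set.univ_subset_iff] using (Mser_subset_Zser_iff 0 n).symm
end

section
/- The direct product of finitely many M𝒵-nilpotent multiplicative Lie algebras is M𝒵-nilpotent. -/
open MulLie
open scoped commutatorElement

/-- The coordinatewise multiplicative Lie algebra structure on a direct
product. -/
instance Pi.mulLie {ι : Type*} (G : ι → Type*) [∀ i, Group (G i)]
    [∀ i, MulLie (G i)] : MulLie (∀ i, G i) where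
  star f g := fun i => star (f i) (g i)
  star_self f := funext fun i => star_self (f i)
  star_mul_right f g h := funext fun i => star_mul_right (f i) (g i) (h i)
  star_mul_left f g h := funext fun i => star_mul_left (f i) (g i) (h i)
  jacobi f g h := funext fun i => jacobi (f i) (g i) (h i)
  conj_star f g h := funext fun i => conj_star (f i) (g i) (h i)

namespace MulLie

variable {G : Type*} [Group G] [MulLie G]

theorem star_one (x : G) : star x (1 : G) = 1 := by
  have h := star_mul_right x 1 1
  simp only [mul_one, one_mul, inv_one] at h
  exact left_eq_mul.1 h

end MulLie

theorem Mser_succ_eq_bot {G : Type*} [Group G] [MulLie G] {n : ℕ} (h : Mser G n = ⊥) :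
    Mser G (n + 1) = ⊥ := by
  rw [Mser, eq_bot_iff, Subgroup.closure_le]
  rintro z ⟨g, m, hm, rfl | rfl⟩ <;>
    simp only [h, Subgroup.mem_bot] at hm <;>
    simp [hm, MulLie.star_one]

theorem Mser_eq_bot_of_le {G : Type*} [Group G] [MulLie G] {n N : ℕ} (h : Mser G n = ⊥)
    (hle : n ≤ N) : Mser G N = ⊥ :=
  Nat.le_induction h (fun _ _ => Mser_succ_eq_bot) N hle

section Pi

variable {ι : Type*} (G : ι → Type*) [∀ i, Group (G i)] [∀ i, MulLie (G i)]

theorem Mser_pi_le_pi (n : ℕ) :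
    Mser (∀ i, G i) n ≤ Subgroup.pi Set.univ fun i => Mser (G i) n := by
  induction n with
  | zero => exact fun _ _ _ _ => trivial
  | succ k ih =>
    rw [Mser, Subgroup.closure_le]
    rintro z ⟨g, m, hm, rfl | rfl⟩ i -
    · exact Subgroup.subset_closure ⟨g i, m i, ih hm i trivial, Or.inl rfl⟩
    · exact Subgroup.subset_closure ⟨g i, m i, ih hm i trivial, Or.inr rfl⟩

theorem Mser_pi_eq_bot {n : ℕ} (h : ∀ i, Mser (G i) n = ⊥) : Mser (∀ i, G i) n = ⊥ :=
  eq_bot_iff.2 <| (Mser_pi_le_pi G n).trans <| by simp only [h, Subgroup.pi_bot, le_refl]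

end Pi

/-- The direct product of finitely many `M𝒵`-nilpotent multiplicative Lie
algebras is `M𝒵`-nilpotent. -/
theorem pi_MZnilpotent {ι : Type*} [Finite ι] (G : ι → Type*)
    [∀ i, Group (G i)] [∀ i, MulLie (G i)]
    (hnil : ∀ i, ∃ n : ℕ, Mser (G i) n = ⊥) :
    ∃ n : ℕ, Mser (∀ i, G i) n = ⊥ := by
  choose n hn using hnil
  obtain ⟨N, hN⟩ := Finite.exists_le n
  exact ⟨N, Mser_pi_eq_bot G fun i => Mser_eq_bot_of_le (hn i) (hN i)⟩
end
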